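/- arXiv:2506.20705 — 2 statements merged into one kernel-verified Lean document; each statement's English description precedes it below -/
import Mathlib

section
/- Let W be an open bounded subset of ℝ^d with 0 ∈ W, and let f : W → ℝ be continuous at 0 and bounded on W. Then lim_{δ→−∞} ∫_W f(y) ‖y‖² e^{−2δ} N(y, δ) dy = f(0) · d, where N(y, δ) := (2π)^{−d/2} e^{−dδ} exp(−(1/2)‖y‖² e^{−2δ}). -/
/-!
Substituting `y = e^δ x` turns the integral into `∫ f(e^δ x) ‖x‖² N(x, 0) dx` over `e^{-δ} W`:
the Jacobian `e^{dδ}` cancels the normalisation `e^{-dδ}`, and `‖y‖² e^{-2δ} = ‖x‖²`.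
As `δ → -∞`, `e^δ x → 0` and eventually lies in the neighbourhood `W` of `0`, so dominated
convergence (`f` is bounded) gives the limit `f(0) ∫ ‖x‖² N(x, 0) dx`. In coordinates this last
integral splits into `d` one-dimensional second moments of the standard normal law, each equal
to its variance `1`.
-/

open MeasureTheory Real Filter Set Topology

noncomputable section

/-- The isotropic Gaussian density on `ℝ^d` with mean `0` and covariance `e^{2δ} I_d`:
`N(y, δ) = (2π)^{-d/2} e^{-dδ} exp(-‖y‖² e^{-2δ}/2)`. -/
def gaussDensity {d : ℕ} (y : EuclideanSpace ℝ (Fin d)) (δ : ℝ) : ℝ :=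
  (2 * π) ^ (-(d : ℝ) / 2) * Real.exp (-(d : ℝ) * δ) *
    Real.exp (-(1 / 2) * ‖y‖ ^ 2 * Real.exp (-2 * δ))

open ProbabilityTheory
open scoped NNReal

theorem tendsto_integral_comp_smul_mul {E : Type*} [NormedAddCommGroup E] [NormedSpace ℝ E]
    [MeasurableSpace E] [BorelSpace E] {μ : Measure E} {h g : E → ℝ} {K : ℝ}
    (hh : Measurable h) (hK : ∀ x, |h x| ≤ K) (h0 : ContinuousAt h 0) (hg : Integrable g μ) :
    Tendsto (fun c : ℝ ↦ ∫ x, h (c • x) * g x ∂μ) (𝓝 0) (𝓝 (h 0 * ∫ x, g x ∂μ)) := by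
  rw [← integral_const_mul]
  refine tendsto_integral_filter_of_dominated_convergence (fun x ↦ K * ‖g x‖)
    (.of_forall fun c ↦ ((hh.comp (measurable_const_smul c)).aestronglyMeasurable.mul
      hg.aestronglyMeasurable))
    (.of_forall fun c ↦ .of_forall fun x ↦ ?_) (hg.norm.const_mul K) (.of_forall fun x ↦ ?_)
  · rw [norm_mul, Real.norm_eq_abs]
    exact mul_le_mul_of_nonneg_right (hK _) (norm_nonneg _)
  · have hsmul : Tendsto (fun c : ℝ ↦ c • x) (𝓝 0) (𝓝 0) := by
      simpa using (tendsto_id (x := 𝓝 (0 : ℝ))).smul_const x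
    exact (h0.tendsto.comp hsmul).mul_const (g x)

theorem integral_sq_mul_gaussianPDFReal (v : ℝ≥0) :
    ∫ x, x ^ 2 * gaussianPDFReal 0 v x = v := by
  rcases eq_or_ne v 0 with rfl | hv
  · simp
  calc ∫ x, x ^ 2 * gaussianPDFReal 0 v x = ∫ x, x ^ 2 ∂gaussianReal 0 v := by
        simp_rw [integral_gaussianReal_eq_integral_smul hv, smul_eq_mul, mul_comm]
    _ = Var[id; gaussianReal 0 v] :=
        (variance_of_integral_eq_zero aemeasurable_id integral_id_gaussianReal).symm
    _ = v := variance_id_gaussianReal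

theorem integrable_sq_mul_gaussianPDFReal (v : ℝ≥0) :
    Integrable fun x ↦ x ^ 2 * gaussianPDFReal 0 v x := by
  rcases eq_or_ne v 0 with rfl | hv
  · simp
  exact .of_integral_ne_zero <| by rw [integral_sq_mul_gaussianPDFReal]; exact_mod_cast hv

section Coordinates

variable {ι : Type*} [Fintype ι]

theorem sq_mul_prod_eq_prod_ite [DecidableEq ι] (g : ℝ → ℝ) (y : ι → ℝ) (i : ι) :
    y i ^ 2 * ∏ j, g (y j) = ∏ j, (if j = i then y j ^ 2 else 1) * g (y j) := by
  rw [Finset.prod_mul_distrib, Finset.prod_ite_eq']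
  simp

theorem integrable_sq_mul_prod_gaussianPDFReal (i : ι) :
    Integrable fun y : ι → ℝ ↦ y i ^ 2 * ∏ j, gaussianPDFReal 0 1 (y j) := by
  classical
  simp_rw [sq_mul_prod_eq_prod_ite _ _ i]
  refine Integrable.fintype_prod
    (f := fun j t ↦ (if j = i then t ^ 2 else 1) * gaussianPDFReal 0 1 t) fun j ↦ ?_
  split_ifs
  · exact integrable_sq_mul_gaussianPDFReal 1
  · simpa using integrable_gaussianPDFReal 0 1

theorem integral_sq_mul_prod_gaussianPDFReal (i : ι) :
    ∫ y : ι → ℝ, y i ^ 2 * ∏ j, gaussianPDFReal 0 1 (y j) = 1 := by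
  classical
  simp_rw [sq_mul_prod_eq_prod_ite _ _ i]
  rw [integral_fintype_prod_volume_eq_prod
    (fun j t ↦ (if j = i then t ^ 2 else 1) * gaussianPDFReal 0 1 t)]
  refine Finset.prod_eq_one fun j _ ↦ ?_
  split_ifs
  · simpa using integral_sq_mul_gaussianPDFReal 1
  · simpa using integral_gaussianPDFReal_eq_one 0 one_ne_zero

theorem integrable_norm_sq_mul_prod_gaussianPDFReal :
    Integrable fun x : EuclideanSpace ℝ ι ↦ ‖x‖ ^ 2 * ∏ j, gaussianPDFReal 0 1 (x j) := by
  rw [← (PiLp.volume_preserving_toLp ι).integrable_comp_emb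
    (MeasurableEquiv.toLp 2 _).measurableEmbedding]
  simp_rw [Function.comp_def, EuclideanSpace.real_norm_sq_eq, Finset.sum_mul]
  exact integrable_finsetSum _ fun i _ ↦ integrable_sq_mul_prod_gaussianPDFReal i

theorem integral_norm_sq_mul_prod_gaussianPDFReal :
    ∫ x : EuclideanSpace ℝ ι, ‖x‖ ^ 2 * ∏ j, gaussianPDFReal 0 1 (x j) = Fintype.card ι := by
  rw [← (PiLp.volume_preserving_toLp ι).integral_comp
    (MeasurableEquiv.toLp 2 _).measurableEmbedding]
  simp_rw [EuclideanSpace.real_norm_sq_eq, Finset.sum_mul]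
  rw [integral_finsetSum _ fun i _ ↦ integrable_sq_mul_prod_gaussianPDFReal i]
  simp [integral_sq_mul_prod_gaussianPDFReal]

end Coordinates

theorem gaussDensity_zero_eq_prod {d : ℕ} (x : EuclideanSpace ℝ (Fin d)) :
    gaussDensity x 0 = ∏ j, gaussianPDFReal 0 1 (x j) := by
  simp only [gaussDensity, gaussianPDFReal, Finset.prod_mul_distrib, ← Real.exp_sum,
    EuclideanSpace.real_norm_sq_eq, Finset.prod_const, Finset.card_univ, Fintype.card_fin]
  congr 1
  · rw [Real.sqrt_eq_rpow, ← Real.rpow_neg (by positivity), ← Real.rpow_natCast,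
      ← Real.rpow_mul (by positivity)]
    simp [div_eq_inv_mul, mul_comm]
  · congr 1
    rw [Finset.mul_sum]
    simp [div_eq_inv_mul]

theorem norm_sq_mul_gaussDensity_exp_smul {d : ℕ} (x : EuclideanSpace ℝ (Fin d)) (δ : ℝ) :
    ‖Real.exp δ • x‖ ^ 2 * Real.exp (-2 * δ) * gaussDensity (Real.exp δ • x) δ
      = (Real.exp δ ^ d)⁻¹ * (‖x‖ ^ 2 * gaussDensity x 0) := by
  have h2 : Real.exp δ ^ 2 * Real.exp (-2 * δ) = 1 := by
    rw [← Real.exp_nat_mul, ← Real.exp_add]; simp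
  have hd : Real.exp (-d * δ) = (Real.exp δ ^ d)⁻¹ := by
    rw [← Real.exp_nat_mul, ← Real.exp_neg]; ring_nf
  simp only [gaussDensity, norm_smul, Real.norm_eq_abs, abs_of_pos (Real.exp_pos δ), mul_zero,
    Real.exp_zero, mul_one, hd]
  rw [show -(1 / 2) * (rexp δ * ‖x‖) ^ 2 * rexp (-2 * δ) = -(1 / 2) * ‖x‖ ^ 2 by
    linear_combination (-(1 / 2) * ‖x‖ ^ 2) * h2]
  linear_combination ((2 * π) ^ (-(d : ℝ) / 2) * (Real.exp δ ^ d)⁻¹ * ‖x‖ ^ 2 *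
    Real.exp (-(1 / 2) * ‖x‖ ^ 2)) * h2

theorem setIntegral_mul_norm_sq_mul_gaussDensity {d : ℕ} {W : Set (EuclideanSpace ℝ (Fin d))}
    (hW : MeasurableSet W) (f : EuclideanSpace ℝ (Fin d) → ℝ) (δ : ℝ) :
    ∫ y in W, f y * (‖y‖ ^ 2 * Real.exp (-2 * δ) * gaussDensity y δ)
      = ∫ x, W.indicator f (Real.exp δ • x) * (‖x‖ ^ 2 * gaussDensity x 0) := by
  set σ := Real.exp δ
  have hσd : σ ^ d ≠ 0 := by positivity
  have hscale : ∀ x, W.indicator f (σ • x) *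
      (‖σ • x‖ ^ 2 * Real.exp (-2 * δ) * gaussDensity (σ • x) δ)
      = (σ ^ d)⁻¹ * (W.indicator f (σ • x) * (‖x‖ ^ 2 * gaussDensity x 0)) := fun x ↦ by
    rw [norm_sq_mul_gaussDensity_exp_smul]
    ring
  have := Measure.integral_comp_smul_of_nonneg volume
    (fun y ↦ W.indicator f y * (‖y‖ ^ 2 * Real.exp (-2 * δ) * gaussDensity y δ)) σ
    (hR := (Real.exp_pos δ).le)
  simp only [hscale, integral_const_mul, finrank_euclideanSpace_fin, smul_eq_mul] at this
  rw [mul_left_cancel₀ (inv_ne_zero hσd) this, ← integral_indicator hW]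
  simp_rw [indicator_mul_left]

theorem integrable_norm_sq_mul_gaussDensity_zero (d : ℕ) :
    Integrable fun x : EuclideanSpace ℝ (Fin d) ↦ ‖x‖ ^ 2 * gaussDensity x 0 := by
  simpa only [gaussDensity_zero_eq_prod] using
    integrable_norm_sq_mul_prod_gaussianPDFReal (ι := Fin d)

theorem integral_norm_sq_mul_gaussDensity_zero (d : ℕ) :
    ∫ x : EuclideanSpace ℝ (Fin d), ‖x‖ ^ 2 * gaussDensity x 0 = d := by
  simpa only [gaussDensity_zero_eq_prod, Fintype.card_fin] using
    integral_norm_sq_mul_prod_gaussianPDFReal (ι := Fin d)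

theorem gaussian_second_moment_local_general
    {d : ℕ} (W : Set (EuclideanSpace ℝ (Fin d)))
    (hWopen : IsOpen W) (h0W : (0 : EuclideanSpace ℝ (Fin d)) ∈ W)
    (f : EuclideanSpace ℝ (Fin d) → ℝ) (hf_meas : Measurable f)
    (hf_cont : ContinuousWithinAt f W 0)
    (hf_bdd : ∃ K : ℝ, ∀ y ∈ W, |f y| ≤ K) :
    Tendsto (fun δ : ℝ =>
        ∫ y in W, f y * (‖y‖ ^ 2 * Real.exp (-2 * δ) * gaussDensity y δ))
      atBot (𝓝 (f 0 * (d : ℝ))) := by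
  obtain ⟨K, hK⟩ := hf_bdd
  have hW : W ∈ 𝓝 0 := hWopen.mem_nhds h0W
  have hbdd : ∀ y, |W.indicator f y| ≤ K := fun y ↦ by
    by_cases hy : y ∈ W
    · simpa [hy] using hK y hy
    · simpa [hy] using (abs_nonneg _).trans (hK 0 h0W)
  have hcont : ContinuousAt (W.indicator f) 0 :=
    (hf_cont.continuousAt hW).congr <| by
      filter_upwards [hW] with y hy using (indicator_of_mem hy f).symm
  have hlim := (tendsto_integral_comp_smul_mul (hf_meas.indicator hWopen.measurableSet) hbdd hcont
    (integrable_norm_sq_mul_gaussDensity_zero d)).comp Real.tendsto_exp_atBot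
  rw [integral_norm_sq_mul_gaussDensity_zero, indicator_of_mem h0W] at hlim
  exact hlim.congr fun δ ↦
    (setIntegral_mul_norm_sq_mul_gaussDensity hWopen.measurableSet f δ).symm

/-- **Claim 2.** Let `W ⊆ ℝ^d` be open and bounded with `0 ∈ W`, and let `f : W → ℝ` be
measurable, continuous at `0` and bounded on `W`. Then
`∫_W f(y) ‖y‖² e^{-2δ} N(y, δ) dy → f(0) · d` as `δ → -∞`. -/
theorem gaussian_second_moment_local
    {d : ℕ} (W : Set (EuclideanSpace ℝ (Fin d)))
    (hWopen : IsOpen W) (hWbdd : Bornology.IsBounded W) (h0W : (0 : EuclideanSpace ℝ (Fin d)) ∈ W)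
    (f : EuclideanSpace ℝ (Fin d) → ℝ) (hf_meas : Measurable f)
    (hf_cont : ContinuousWithinAt f W 0)
    (hf_bdd : ∃ K : ℝ, ∀ y ∈ W, |f y| ≤ K) :
    Tendsto (fun δ : ℝ =>
        ∫ y in W, f y * (‖y‖ ^ 2 * Real.exp (-2 * δ) * gaussDensity y δ))
      atBot (𝓝 (f 0 * (d : ℝ))) :=
  gaussian_second_moment_local_general W hWopen h0W f hf_meas hf_cont hf_bdd
end
end

section
/- Let u : U → ℝ^{D−d} be smooth on an open set U ⊆ ℝ^d containing 0, with u(0) = 0 and Du(0) = 0, and define G(y) := (1/2) log(‖y‖² + ‖u(y)‖²) for y ≠ 0. Then there exists an open set W ⊆ U containing 0 such that the gradient ∇G(y) = (y + (Du)(y)u(y)) / (‖y‖² + ‖u(y)‖²) is well-defined and nonvanishing for every y ∈ W ∖ {0}. -/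
open Real Filter Set Topology

noncomputable section

/-! Near `0` the derivative of `u` has norm at most `1/2`, so by the mean value inequality
`‖u y‖ ≤ ‖y‖ / 2`. Hence `‖(Du y)† (u y)‖ ≤ ‖y‖ / 4 < ‖y‖`, and `y + (Du y)† (u y)` cannot vanish
for `y ≠ 0`. The gradient formula itself is the chain rule for `log` composed with the squared
norm of `z ↦ (z, u z)`. -/

section

variable {E F : Type*}

theorem exists_ball_subset_forall_norm_fderiv_lt [NormedAddCommGroup E] [NormedSpace ℝ E]
    [NormedAddCommGroup F] [NormedSpace ℝ F] {U : Set E} {u : E → F} {x : E} {c : ℝ}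
    (hU : IsOpen U) (hxU : x ∈ U) (hu : ContDiffOn ℝ 1 u U) (hc : ‖fderiv ℝ u x‖ < c) :
    ∃ r > 0, Metric.ball x r ⊆ U ∧ ∀ z ∈ Metric.ball x r, ‖fderiv ℝ u z‖ < c := by
  have hcont : ContinuousAt (fderiv ℝ u) x :=
    (hu.continuousOn_fderiv_of_isOpen hU le_rfl).continuousAt (hU.mem_nhds hxU)
  obtain ⟨r, hr, hball⟩ :=
    Metric.mem_nhds_iff.1 (inter_mem (hU.mem_nhds hxU) (hcont.norm (Iio_mem_nhds hc)))
  exact ⟨r, hr, fun z hz => (hball hz).1, fun z hz => (hball hz).2⟩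

theorem Convex.norm_le_mul_norm_of_norm_fderiv_le [NormedAddCommGroup E] [NormedSpace ℝ E]
    [NormedAddCommGroup F] [NormedSpace ℝ F] {s : Set E} {u : E → F} {C : ℝ}
    (hs : Convex ℝ s) (h0s : (0 : E) ∈ s) (hu0 : u 0 = 0)
    (hdiff : ∀ z ∈ s, DifferentiableAt ℝ u z) (hbound : ∀ z ∈ s, ‖fderiv ℝ u z‖ ≤ C)
    {z : E} (hz : z ∈ s) : ‖u z‖ ≤ C * ‖z‖ := by
  simpa [hu0] using hs.norm_image_sub_le_of_norm_fderiv_le hdiff hbound h0s hz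

variable [NormedAddCommGroup E] [InnerProductSpace ℝ E] [CompleteSpace E]
  [NormedAddCommGroup F] [InnerProductSpace ℝ F] [CompleteSpace F]

theorem hasGradientAt_half_log_norm_sq_add_norm_sq {u : E → F} {y : E}
    (hu : DifferentiableAt ℝ u y) (hy : ‖y‖ ^ 2 + ‖u y‖ ^ 2 ≠ 0) :
    HasGradientAt (fun z => (1 / 2) * Real.log (‖z‖ ^ 2 + ‖u z‖ ^ 2))
      ((‖y‖ ^ 2 + ‖u y‖ ^ 2)⁻¹ • (y + ContinuousLinearMap.adjoint (fderiv ℝ u y) (u y))) y := by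
  have hsum : HasFDerivAt (fun z => ‖z‖ ^ 2 + ‖u z‖ ^ 2)
      (2 • innerSL ℝ y + 2 • (innerSL ℝ (u y)).comp (fderiv ℝ u y)) y :=
    (hasStrictFDerivAt_norm_sq y).hasFDerivAt.add hu.hasFDerivAt.norm_sq
  rw [hasGradientAt_iff_hasFDerivAt]
  convert (hsum.log hy).const_mul (1 / 2 : ℝ) using 1
  · rfl
  ext v
  simp only [InnerProductSpace.toDual_apply_apply, smul_apply,
    add_apply, ContinuousLinearMap.comp_apply, innerSL_apply_apply,
    smul_eq_mul, inner_add_left, real_inner_smul_left,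
    ContinuousLinearMap.adjoint_inner_left, nsmul_eq_mul]
  field_simp
  ring

theorem add_adjoint_apply_ne_zero {A : E →L[ℝ] F} {x : E} {w : F} (h : ‖A‖ * ‖w‖ < ‖x‖) :
    x + ContinuousLinearMap.adjoint A w ≠ 0 := by
  intro hzero
  have hnorm : ‖ContinuousLinearMap.adjoint A w‖ ≤ ‖A‖ * ‖w‖ := by
    simpa only [LinearIsometryEquiv.norm_map] using (ContinuousLinearMap.adjoint A).le_opNorm w
  rw [eq_neg_of_add_eq_zero_right hzero, norm_neg] at hnorm
  exact (h.trans_le hnorm).false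

end

/-- **Proposition 3.** Let `u : U → ℝ^{D-d}` be smooth on an open `U ∋ 0` with `u(0) = 0` and
`Du(0) = 0` (here `m` plays the role of `D - d`), and let
`G(y) = (1/2) log(‖y‖² + ‖u(y)‖²)` for `y ≠ 0`. Then there is an open `W ⊆ U` containing `0`
such that for every `y ∈ W \ {0}`, `G` has gradient
`∇G(y) = (y + Du(y)ᵀ u(y)) / (‖y‖² + ‖u(y)‖²)` at `y`, and this gradient is nonvanishing. -/
theorem gradient_G_nonvanishing
    {d m : ℕ} (U : Set (EuclideanSpace ℝ (Fin d)))
    (hU : IsOpen U) (h0U : (0 : EuclideanSpace ℝ (Fin d)) ∈ U)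
    (u : EuclideanSpace ℝ (Fin d) → EuclideanSpace ℝ (Fin m))
    (hu : ContDiffOn ℝ (⊤ : ℕ∞) u U) (hu0 : u 0 = 0) (hDu0 : fderiv ℝ u 0 = 0) :
    ∃ W : Set (EuclideanSpace ℝ (Fin d)), IsOpen W ∧ (0 : EuclideanSpace ℝ (Fin d)) ∈ W ∧ W ⊆ U ∧
      ∀ y ∈ W, y ≠ 0 →
        HasGradientAt (fun z => (1 / 2) * Real.log (‖z‖ ^ 2 + ‖u z‖ ^ 2))
          ((‖y‖ ^ 2 + ‖u y‖ ^ 2)⁻¹ • (y + ContinuousLinearMap.adjoint (fderiv ℝ u y) (u y))) y ∧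
        (‖y‖ ^ 2 + ‖u y‖ ^ 2)⁻¹ • (y + ContinuousLinearMap.adjoint (fderiv ℝ u y) (u y)) ≠ 0 := by
  have hu1 : ContDiffOn ℝ 1 u U := hu.of_le (by exact_mod_cast le_top)
  obtain ⟨r, hr, hWU, hsmall⟩ := exists_ball_subset_forall_norm_fderiv_lt (c := 1 / 2) hU h0U hu1
    (by rw [hDu0, norm_zero]; norm_num)
  have hdiff : ∀ z ∈ Metric.ball (0 : EuclideanSpace ℝ (Fin d)) r, DifferentiableAt ℝ u z :=
    fun z hz => (hu1.contDiffAt (hU.mem_nhds (hWU hz))).differentiableAt one_ne_zero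
  refine ⟨_, Metric.isOpen_ball, Metric.mem_ball_self hr, hWU, fun y hy hy0 => ?_⟩
  have hpos : 0 < ‖y‖ ^ 2 + ‖u y‖ ^ 2 := by positivity
  refine ⟨hasGradientAt_half_log_norm_sq_add_norm_sq (hdiff y hy) hpos.ne', ?_⟩
  have hlip : ‖u y‖ ≤ 1 / 2 * ‖y‖ := (convex_ball 0 r).norm_le_mul_norm_of_norm_fderiv_le
    (Metric.mem_ball_self hr) hu0 hdiff (fun z hz => (hsmall z hz).le) hy
  refine smul_ne_zero (inv_ne_zero hpos.ne') (add_adjoint_apply_ne_zero ?_)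
  calc ‖fderiv ℝ u y‖ * ‖u y‖ ≤ 1 / 2 * (1 / 2 * ‖y‖) :=
        mul_le_mul (hsmall y hy).le hlip (norm_nonneg _) (by norm_num)
    _ < ‖y‖ := by linarith [norm_pos_iff.2 hy0]
end
end
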